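/- arXiv:1810.06715 — 2 statements merged into one kernel-verified Lean document; each statement's English description precedes it below -/
import Mathlib

section
/- Let θ : ℝ → ℝ⁶ be a differentiable solution of the oscillator system such that for all t ∈ ℝ, θ_{1,2}(t) = θ_{1,1}(t) (population 1 phase-synchronized) and θ_{2,2}(t) = θ_{2,1}(t) + π (population 2 in splay/antiphase). Then for every t ∈ ℝ one has |θ̇_{1,1}(t) − θ̇_{2,1}(t)| ≥ 2|sin α₂| − 2K. In particular, if the asymptotic average frequencies Ω_σ = lim_{T→∞} (θ_{σ,1}(T) − θ_{σ,1}(0))/T exist for σ = 1, 2, then |Ω₁ − Ω₂| ≥ 2|sin α₂| − 2K; hence if 2|sin α₂| − 2K > 0 the two populations have distinct asymptotic average frequencies (localized frequency synchrony). -/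
open Real Filter

/-- Pairwise coupling function within populations (N = 2 case). -/
noncomputable def g2 (α₂ r : ℝ) (ϑ : ℝ) : ℝ :=
  sin (ϑ + α₂) - r * sin (2 * (ϑ + α₂))

/-- Nonpairwise coupling function between populations. -/
noncomputable def g4 (α₄ : ℝ) (ϑ : ℝ) : ℝ := sin (ϑ + α₄)

/-- Mean-field style interaction term `G̃₄(θ_τ; φ)` for populations of two oscillators. -/
noncomputable def G4t (α₄ : ℝ) (θτ : Fin 2 → ℝ) (φ : ℝ) : ℝ :=
  (1 / 4) * (g4 α₄ (θτ 0 - θτ 1 + φ) + g4 α₄ (θτ 1 - θτ 0 + φ))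

/-- If population 1 is phase synchronized and population 2 is in antiphase (splay),
then the instantaneous frequencies of the two populations differ by at least
`2|sin α₂| − 2K`; consequently the asymptotic average frequencies, if they exist,
differ by at least that amount, hence are distinct when `2|sin α₂| − 2K > 0`. -/
theorem localized_frequency_synchrony_N2
    (ω α₂ α₄ r K : ℝ) (hK : 0 ≤ K)
    (θ : Fin 3 → Fin 2 → ℝ → ℝ)
    (hode : ∀ (σ : Fin 3) (k : Fin 2) (t : ℝ),
      HasDerivAt (θ σ k)
        (ω + g2 α₂ r (θ σ (1 - k) t - θ σ k t)
          - K * G4t α₄ (fun j => θ (σ - 1) j t) (θ σ (1 - k) t - θ σ k t)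
          + K * G4t α₄ (fun j => θ (σ + 1) j t) (θ σ (1 - k) t - θ σ k t)) t)
    (hsync : ∀ t : ℝ, θ 0 1 t = θ 0 0 t)
    (hsplay : ∀ t : ℝ, θ 1 1 t = θ 1 0 t + π) :
    (∀ t : ℝ, |deriv (θ 0 0) t - deriv (θ 1 0) t| ≥ 2 * |sin α₂| - 2 * K) ∧
    (∀ Ω₁ Ω₂ : ℝ,
      Tendsto (fun T : ℝ => (θ 0 0 T - θ 0 0 0) / T) atTop (nhds Ω₁) →
      Tendsto (fun T : ℝ => (θ 1 0 T - θ 1 0 0) / T) atTop (nhds Ω₂) →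
      |Ω₁ - Ω₂| ≥ 2 * |sin α₂| - 2 * K ∧
        (2 * |sin α₂| - 2 * K > 0 → Ω₁ ≠ Ω₂)) := by
  -- bound on the interaction term
  have hG : ∀ (x : Fin 2 → ℝ) (φ : ℝ), |G4t α₄ x φ| ≤ 1/2 := by
    intro x φ
    unfold G4t g4
    have h1 := Real.neg_one_le_sin (x 0 - x 1 + φ + α₄)
    have h2 := Real.sin_le_one (x 0 - x 1 + φ + α₄)
    have h3 := Real.neg_one_le_sin (x 1 - x 0 + φ + α₄)
    have h4 := Real.sin_le_one (x 1 - x 0 + φ + α₄)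
    rw [abs_le]; constructor <;> nlinarith
  -- the key pointwise estimate
  have key : ∀ t : ℝ, |deriv (θ 0 0) t - deriv (θ 1 0) t| ≥ 2 * |sin α₂| - 2 * K := by
    intro t
    have e1 := hode 0 0 t
    have e2 := hode 1 0 t
    rw [show (1 - 0 : Fin 2) = 1 by decide, show ((0:Fin 3) - 1) = 2 by decide,
        show ((0:Fin 3) + 1) = 1 by decide] at e1
    rw [show (1 - 0 : Fin 2) = 1 by decide, show ((1:Fin 3) - 1) = 0 by decide,
        show ((1:Fin 3) + 1) = 2 by decide] at e2
    rw [hsync t, sub_self] at e1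
    rw [hsplay t, add_sub_cancel_left] at e2
    have hg0 : g2 α₂ r 0 = Real.sin α₂ - r * Real.sin (2 * α₂) := by
      unfold g2; rw [zero_add]
    have hgπ : g2 α₂ r π = -Real.sin α₂ - r * Real.sin (2 * α₂) := by
      unfold g2
      have h1 : Real.sin (π + α₂) = -Real.sin α₂ := by
        rw [Real.sin_add, Real.sin_pi, Real.cos_pi]; ring
      have h2 : Real.sin (2 * (π + α₂)) = Real.sin (2 * α₂) := by
        have : 2 * (π + α₂) = 2 * α₂ + 2 * π := by ring
        rw [this, Real.sin_add_two_pi]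
      rw [h1, h2]
    have hd : deriv (θ 0 0) t - deriv (θ 1 0) t
        = 2 * Real.sin α₂ + K * (- G4t α₄ (fun j => θ 2 j t) 0
            + G4t α₄ (fun j => θ 1 j t) 0
            + G4t α₄ (fun j => θ 0 j t) π
            - G4t α₄ (fun j => θ 2 j t) π) := by
      rw [e1.deriv, e2.deriv, hg0, hgπ]; ring
    rw [hd]
    have hA : |K * (- G4t α₄ (fun j => θ 2 j t) 0
            + G4t α₄ (fun j => θ 1 j t) 0
            + G4t α₄ (fun j => θ 0 j t) π
            - G4t α₄ (fun j => θ 2 j t) π)| ≤ 2 * K := by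
      rw [abs_mul, abs_of_nonneg hK]
      have b1 := hG (fun j => θ 2 j t) 0
      have b2 := hG (fun j => θ 1 j t) 0
      have b3 := hG (fun j => θ 0 j t) π
      have b4 := hG (fun j => θ 2 j t) π
      have : |(- G4t α₄ (fun j => θ 2 j t) 0
            + G4t α₄ (fun j => θ 1 j t) 0
            + G4t α₄ (fun j => θ 0 j t) π
            - G4t α₄ (fun j => θ 2 j t) π)| ≤ 2 := by
        rw [abs_le] at *
        constructor <;> [nlinarith; nlinarith]
      nlinarith
    have h2s : |2 * Real.sin α₂| = 2 * |Real.sin α₂| := by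
      rw [abs_mul, abs_of_nonneg (by norm_num : (0:ℝ) ≤ 2)]
    set A := (- G4t α₄ (fun j => θ 2 j t) 0
            + G4t α₄ (fun j => θ 1 j t) 0
            + G4t α₄ (fun j => θ 0 j t) π
            - G4t α₄ (fun j => θ 2 j t) π) with hA'
    have htri : |2 * Real.sin α₂| ≤ |2 * Real.sin α₂ + K * A| + |K * A| := by
      have := abs_add_le (2 * Real.sin α₂ + K * A) (-(K * A))
      simp only [add_neg_cancel_right, abs_neg] at this
      linarith
    rw [h2s] at htri
    linarith
  refine ⟨key, ?_⟩
  intro Ω₁ Ω₂ h1 h2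
  set c := 2 * |Real.sin α₂| - 2 * K with hc
  -- the slope estimate for T > 0 via the mean value theorem
  have hder : ∀ x : ℝ, HasDerivAt (fun s => θ 0 0 s - θ 1 0 s)
      (deriv (θ 0 0) x - deriv (θ 1 0) x) x := fun x =>
    ((hode 0 0 x).differentiableAt.hasDerivAt).sub
      ((hode 1 0 x).differentiableAt.hasDerivAt)
  have slope : ∀ T : ℝ, 0 < T →
      c ≤ |(θ 0 0 T - θ 0 0 0) / T - (θ 1 0 T - θ 1 0 0) / T| := by
    intro T hT
    obtain ⟨x, _, hx⟩ := exists_hasDerivAt_eq_slope (fun s => θ 0 0 s - θ 1 0 s)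
      (fun x => deriv (θ 0 0) x - deriv (θ 1 0) x) hT
      (fun x _ => (hder x).continuousAt.continuousWithinAt)
      (fun x _ => hder x)
    have : (θ 0 0 T - θ 0 0 0) / T - (θ 1 0 T - θ 1 0 0) / T
        = deriv (θ 0 0) x - deriv (θ 1 0) x := by
      rw [hx, sub_zero]; ring
    rw [this]
    exact key x
  have hlim : Tendsto (fun T : ℝ => (θ 0 0 T - θ 0 0 0) / T - (θ 1 0 T - θ 1 0 0) / T)
      atTop (nhds (Ω₁ - Ω₂)) := h1.sub h2
  have hge : c ≤ |Ω₁ - Ω₂| := by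
    refine ge_of_tendsto hlim.abs ?_
    filter_upwards [eventually_gt_atTop (0:ℝ)] with T hT
    exact slope T hT
  refine ⟨hge, fun hpos heq => ?_⟩
  rw [heq, sub_self, abs_zero] at hge
  linarith
end

section
/- Let r, K ∈ ℝ satisfy 0 < 10r < K (so that 3K − 24r > 0 and (3/2)K − 15r > 0). Then the product of saddle values of the heteroclinic cycle, (15r / (3K − 24r)) · (24r / ((3/2)K − 15r)), is strictly greater than 1 if and only if K < 18r. -/
/-- For `0 < 10r < K`, the product of the saddle values
`ν^{DSS} = 15r/(3K − 24r)` and `ν^{DDS} = 24r/((3/2)K − 15r)` of the heteroclinic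
cycle exceeds `1` if and only if `K < 18r` (dissipativity condition). -/
theorem saddle_value_product_gt_one_iff (r K : ℝ) (hr : 0 < 10 * r) (hK : 10 * r < K) :
    (15 * r / (3 * K - 24 * r)) * (24 * r / ((3 / 2) * K - 15 * r)) > 1 ↔ K < 18 * r := by
  have h1 : 0 < 3 * K - 24 * r := by linarith
  have h2 : 0 < (3 / 2) * K - 15 * r := by linarith
  rw [div_mul_div_comm, gt_iff_lt, lt_div_iff₀ (by positivity)]
  constructor
  · intro h; nlinarith
  · intro h; nlinarith
end
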